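/- Let Σ be a countable collection of pairwise disjoint subintervals σ ⊆ [0,1] of positive length, and let W_Σ = {f ∈ L²([0,1]) : f is a.e. constant on each σ ∈ Σ}. Then the orthogonal complement of W_Σ in L²([0,1]) is W_Σ^⊥ = {f ∈ L²([0,1]) : ∫_σ f = 0 for every σ ∈ Σ, and f = 0 a.e. outside ⋃_{σ∈Σ} σ}. -/

import Mathlib

open MeasureTheory

/-- Let `Σ` be a countable family of pairwise disjoint subintervals
`σ i = (a i, b i)` of positive length inside `[0,1]`, and let
`W_Σ = {f ∈ L²([0,1]) : f is a.e. constant on each σ i}`. Then the orthogonal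
complement of `W_Σ` in `L²([0,1])` consists of exactly those `g` with
`∫_{σ i} g = 0` for every `i` and `g = 0` a.e. outside `⋃ i, σ i`. -/
theorem orthogonal_complement_of_blockwise_constant
    (ι : Type*) [Countable ι] (a b : ι → ℝ)
    (hab : ∀ i, a i < b i)
    (hsub : ∀ i, Set.Ioo (a i) (b i) ⊆ Set.Icc (0:ℝ) 1)
    (hdisj : Pairwise (Function.onFun Disjoint (fun i => Set.Ioo (a i) (b i)))) :
    {g : Lp ℝ 2 (volume.restrict (Set.Icc (0:ℝ) 1)) |
        ∀ f ∈ {f : Lp ℝ 2 (volume.restrict (Set.Icc (0:ℝ) 1)) |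
          ∀ i, ∃ c : ℝ,
            ∀ᵐ x ∂((volume.restrict (Set.Icc (0:ℝ) 1)).restrict (Set.Ioo (a i) (b i))),
              f x = c},
          inner ℝ f g = (0:ℝ)} =
      {g : Lp ℝ 2 (volume.restrict (Set.Icc (0:ℝ) 1)) |
        (∀ i, ∫ x in Set.Ioo (a i) (b i), g x ∂(volume.restrict (Set.Icc (0:ℝ) 1)) = 0) ∧
        ∀ᵐ x ∂(volume.restrict (Set.Icc (0:ℝ) 1)),
          x ∉ ⋃ i, Set.Ioo (a i) (b i) → g x = 0} := by
  set μ := volume.restrict (Set.Icc (0:ℝ) 1) with hμdef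
  set σ : ι → Set ℝ := fun i => Set.Ioo (a i) (b i) with hσdef
  have hmeas : ∀ i, MeasurableSet (σ i) := fun i => measurableSet_Ioo
  have hfin : ∀ i, μ (σ i) ≠ ⊤ := by
    intro i
    refine ne_of_lt (lt_of_le_of_lt ?_ (measure_Ioo_lt_top (μ := volume) (a := a i) (b := b i)))
    rw [hμdef, Measure.restrict_apply (hmeas i)]
    exact measure_mono Set.inter_subset_left
  set U : Set ℝ := ⋃ i, σ i with hUdef
  have hUmeas : MeasurableSet U := MeasurableSet.iUnion hmeas
  ext g
  simp only [Set.mem_setOf_eq]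
  constructor
  · intro hg
    constructor
    · -- integrals over each σ i vanish, using the indicator of σ i
      intro i
      have hmem : indicatorConstLp 2 (hmeas i) (hfin i) (1:ℝ) ∈
          {f : Lp ℝ 2 μ | ∀ j, ∃ c : ℝ, ∀ᵐ x ∂(μ.restrict (σ j)), f x = c} := by
        intro j
        by_cases hij : j = i
        · subst hij
          refine ⟨1, ?_⟩
          filter_upwards [ae_restrict_of_ae (indicatorConstLp_coeFn (p := 2)
            (hs := hmeas j) (hμs := hfin j) (c := (1:ℝ))), ae_restrict_mem (hmeas j)]
            with x hx hxj
          rw [hx, Set.indicator_of_mem hxj]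
        · refine ⟨0, ?_⟩
          filter_upwards [ae_restrict_of_ae (indicatorConstLp_coeFn (p := 2)
            (hs := hmeas i) (hμs := hfin i) (c := (1:ℝ))), ae_restrict_mem (hmeas j)]
            with x hx hxj
          rw [hx, Set.indicator_of_notMem]
          exact fun hxi => Set.disjoint_left.mp (hdisj hij) hxj hxi
      have := hg _ hmem
      rwa [L2.inner_indicatorConstLp_one (hmeas i) (hfin i) g] at this
    · -- g vanishes a.e. outside U, using the truncation of g to Uᶜ
      have hgmem : MemLp (⇑g) 2 μ := Lp.memLp g
      have hind : MemLp (Uᶜ.indicator (⇑g)) 2 μ := hgmem.indicator hUmeas.compl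
      set f : Lp ℝ 2 μ := hind.toLp _ with hfdef
      have hfmem : f ∈
          {f : Lp ℝ 2 μ | ∀ j, ∃ c : ℝ, ∀ᵐ x ∂(μ.restrict (σ j)), f x = c} := by
        intro j
        refine ⟨0, ?_⟩
        filter_upwards [ae_restrict_of_ae hind.coeFn_toLp, ae_restrict_mem (hmeas j)]
          with x hx hxj
        rw [hx, Set.indicator_of_notMem]
        intro hxc
        exact hxc (Set.mem_iUnion.mpr ⟨j, hxj⟩)
      have h0 := hg _ hfmem
      rw [L2.inner_def] at h0
      have hcongr : (fun x => (inner ℝ (f x) (g x) : ℝ)) =ᵐ[μ]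
          (fun x => Uᶜ.indicator (fun y => g y * g y) x) := by
        filter_upwards [hind.coeFn_toLp] with x hx
        simp only [RCLike.inner_apply, conj_trivial, hfdef, hx]
        by_cases hxU : x ∈ Uᶜ
        · rw [Set.indicator_of_mem hxU, Set.indicator_of_mem hxU]
        · rw [Set.indicator_of_notMem hxU, Set.indicator_of_notMem hxU, mul_zero]
      rw [integral_congr_ae hcongr, integral_indicator hUmeas.compl] at h0
      have hint : Integrable (fun x => g x * g x) (μ.restrict Uᶜ) := by
        have := L2.integrable_inner (𝕜 := ℝ) g g
        simp only [RCLike.inner_apply, conj_trivial] at this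
        exact this.restrict
      have hnn : 0 ≤ᵐ[μ.restrict Uᶜ] fun x => g x * g x :=
        Filter.Eventually.of_forall fun x => mul_self_nonneg _
      have hzero : (fun x => g x * g x) =ᵐ[μ.restrict Uᶜ] 0 :=
        (integral_eq_zero_iff_of_nonneg_ae hnn hint).mp h0
      have hg0 : ∀ᵐ x ∂(μ.restrict Uᶜ), g x = 0 := by
        filter_upwards [hzero] with x hx
        exact mul_self_eq_zero.mp hx
      have := (ae_restrict_iff' hUmeas.compl).mp hg0
      filter_upwards [this] with x hx hxU
      exact hx hxU
  · -- converse direction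
    rintro ⟨h1, h2⟩ f hf
    rw [L2.inner_def]
    have hint : Integrable (fun x => f x * g x) μ := by
      have := L2.integrable_inner (𝕜 := ℝ) f g
      simpa only [RCLike.inner_apply, conj_trivial, mul_comm] using this
    have hrw : (fun x => (inner ℝ (f x) (g x) : ℝ)) = fun x => f x * g x := by
      funext x; simp [RCLike.inner_apply, mul_comm]
    rw [hrw, ← integral_add_compl hUmeas hint]
    have hUc : ∫ x in Uᶜ, f x * g x ∂μ = 0 := by
      have hg0 : ∀ᵐ x ∂(μ.restrict Uᶜ), g x = 0 := by
        rw [ae_restrict_iff' hUmeas.compl]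
        filter_upwards [h2] with x hx hxU
        exact hx hxU
      refine integral_eq_zero_of_ae ?_
      filter_upwards [hg0] with x hx
      rw [hx, mul_zero]; rfl
    have hUint : ∫ x in U, f x * g x ∂μ = 0 := by
      rw [hUdef, integral_iUnion hmeas hdisj hint.integrableOn]
      have : ∀ i, ∫ x in σ i, f x * g x ∂μ = 0 := by
        intro i
        obtain ⟨c, hc⟩ := hf i
        have : ∫ x in σ i, f x * g x ∂μ = ∫ x in σ i, c * g x ∂μ := by
          refine integral_congr_ae ?_
          filter_upwards [hc] with x hx
          rw [hx]
        rw [this, integral_const_mul, h1 i, mul_zero]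
      simp only [this, tsum_zero]
    rw [hUc, hUint, add_zero]
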